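/- Assume q^{2l} = 1 where l ≥ 2 is the smallest positive integer with this property. Let n be an integer with 1 ≤ n < l, let ν ∈ ℂ with ν ≠ 0, and let c ∈ ℂ satisfy (q²+1)c = (q^{2n}+1)ν. Let V = ℂ^n with basis v₀, …, v_{n−1} and define: ρ_C v_p = c v_p; ρ₀ v_p = λ⁻¹ (c − q^{2p} ν) v_p; ρ₋ v_p = v_{p+1} for p < n−1 and ρ₋ v_{n−1} = 0; ρ₊ v₀ = 0 and ρ₊ v_p = λ⁻¹ [p] q^{p−2} ν ( (q²+1)c − (q^{2p}+1)ν ) v_{p−1} for 1 ≤ p ≤ n−1. Then (ρ₀, ρ₊, ρ₋, ρ_C) is an irreducible n-dimensional representation of B. -/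

import Mathlib

/-!
In the basis `v₀, …, v_{n-1}`, `ρ₀` is `diagonal (weight q ν c)`, `ρ₊` is
`upperShift n (raiseCoeff q ν c)` and `ρ₋` is `lowerShift ℂ n`. Each relation then compares shift
or diagonal matrices entry by entry and reduces to a scalar identity between consecutive weights
and raising coefficients; the boundary entries vanish because `raiseCoeff` is zero at `0` and, by
the choice of `c`, at `n`.

For irreducibility: `q²` has no nontrivial power `1` below `l > n`, so the weights are pairwise
distinct and a nonzero invariant subspace, being the sum of its intersections with the eigenspaces
of `ρ₀`, contains some `v_p`. From there `ρ₋` reaches every `v_{p'}` with `p' > p`, and `ρ₊`, whose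
coefficients vanish only at `0` and `n`, every `v_{p'}` with `p' < p`.
-/

noncomputable section

namespace SL2q

def qNum (q : ℂ) (p : ℕ) : ℂ := (q ^ p - q⁻¹ ^ p) / (q - q⁻¹)

open Matrix Function

lemma pow_injOn_Iio_of_pow_ne_one {M : Type*} [MonoidWithZero M] [IsLeftCancelMulZero M]
    {x : M} (hx : x ≠ 0) {l : ℕ} (h : ∀ m, 0 < m → m < l → x ^ m ≠ 1) :
    Set.InjOn (x ^ ·) (Set.Iio l) := by
  have pow_ne {a b : ℕ} (hab : a < b) (hb : b < l) : x ^ a ≠ x ^ b := by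
    intro he
    refine h (b - a) (by omega) (by omega) (mul_left_cancel₀ (pow_ne_zero a hx) ?_)
    rw [← pow_add, Nat.add_sub_cancel' hab.le, mul_one, he]
  intro a ha b hb hab
  rcases lt_trichotomy a b with hlt | rfl | hgt
  · exact absurd hab (pow_ne hlt hb)
  · rfl
  · exact absurd hab.symm (pow_ne hgt ha)

section Shift

variable {R : Type*} [CommRing R] {n : ℕ}

variable (R n) in
def lowerShift : Matrix (Fin n) (Fin n) R :=
  of fun i j => if (i : ℕ) = (j : ℕ) + 1 then 1 else 0

variable (n) in
def upperShift (f : ℕ → R) : Matrix (Fin n) (Fin n) R :=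
  of fun i j => if (i : ℕ) + 1 = (j : ℕ) then f j else 0

-- `v_m` for `m < n` and `0` for `m ≥ n`, so that `ρ₋ v_{n-1} = v_n = 0`.
variable (R n) in
def stdVec (m : ℕ) : Fin n → R := fun i => if (i : ℕ) = m then 1 else 0

lemma stdVec_val (i : Fin n) : stdVec R n i = Pi.single i 1 := by
  ext j
  simp [stdVec, Pi.single_apply, Fin.val_inj]

lemma sum_ite_val_eq {M : Type*} [AddCommMonoid M] (m : ℕ) (g : Fin n → M) :
    (∑ k : Fin n, if (k : ℕ) = m then g k else 0) = if h : m < n then g ⟨m, h⟩ else 0 := by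
  split_ifs with h
  · rw [Fintype.sum_eq_single ⟨m, h⟩ fun k hk => if_neg fun e => hk (Fin.ext e)]
    simp
  · exact Finset.sum_eq_zero fun k _ => if_neg fun (e : (k : ℕ) = m) => h (e ▸ k.isLt)

lemma lowerShift_mulVec_stdVec (m : ℕ) : lowerShift R n *ᵥ stdVec R n m = stdVec R n (m + 1) := by
  ext i
  simp only [mulVec, dotProduct, lowerShift, stdVec, of_apply, mul_ite, mul_one, mul_zero,
    sum_ite_val_eq]
  have := i.isLt
  split_ifs <;> first | rfl | omega

lemma upperShift_mulVec_stdVec_succ (f : ℕ → R) {m : ℕ} (hm : m + 1 < n) :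
    upperShift n f *ᵥ stdVec R n (m + 1) = f (m + 1) • stdVec R n m := by
  ext i
  simp only [mulVec, dotProduct, upperShift, stdVec, of_apply, mul_ite, mul_one, mul_zero,
    sum_ite_val_eq, dif_pos hm, Pi.smul_apply, smul_eq_mul, Nat.add_right_cancel_iff]

lemma upperShift_mul_lowerShift {f : ℕ → R} (hf : f n = 0) :
    upperShift n f * lowerShift R n = diagonal fun i : Fin n => f ((i : ℕ) + 1) := by
  ext i j
  simp only [mul_apply, upperShift, lowerShift, of_apply, mul_ite, mul_one, mul_zero,
    sum_ite_val_eq, diagonal_apply]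
  rcases eq_or_ne i j with rfl | hij
  · by_cases h : (i : ℕ) + 1 < n
    · simp [h]
    · simp [show (i : ℕ) + 1 = n by omega, hf]
  · simp [hij, Fin.val_ne_of_ne hij]

lemma lowerShift_mul_upperShift {f : ℕ → R} (hf : f 0 = 0) :
    lowerShift R n * upperShift n f = diagonal fun i : Fin n => f i := by
  ext i j
  simp only [mul_apply, upperShift, lowerShift, of_apply, ite_mul, one_mul, zero_mul,
    diagonal_apply]
  rcases Nat.eq_zero_or_pos i with hi | hi
  · simp [hi, hf]
  · have hk (k : Fin n) : (i : ℕ) = k + 1 ↔ (k : ℕ) = i - 1 := by omega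
    simp only [hk, sum_ite_val_eq, dif_pos (show (i : ℕ) - 1 < n by omega),
      show (i : ℕ) - 1 + 1 = i by omega, Fin.val_inj]
    split_ifs with hij <;> simp [hij]

lemma smul_diagonal_mul_upperShift_sub {a b : R} {d : ℕ → R} (f : ℕ → R)
    (h : ∀ k, a * d k - d (k + 1) = b) :
    a • (diagonal (fun i : Fin n => d i) * upperShift n f) -
      upperShift n f * diagonal (fun i : Fin n => d i) = b • upperShift n f := by
  ext i j
  simp only [Matrix.sub_apply, Matrix.smul_apply, diagonal_mul, mul_diagonal, upperShift,
    of_apply, smul_eq_mul]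
  split_ifs with hij
  · rw [← hij, ← h i]
    ring
  · simp

lemma smul_diagonal_mul_lowerShift_sub {a b : R} {d : ℕ → R}
    (h : ∀ k, a * d (k + 1) - d k = b) :
    a • (diagonal (fun i : Fin n => d i) * lowerShift R n) -
      lowerShift R n * diagonal (fun i : Fin n => d i) = b • lowerShift R n := by
  ext i j
  simp only [Matrix.sub_apply, Matrix.smul_apply, diagonal_mul, mul_diagonal, lowerShift,
    of_apply, smul_eq_mul]
  split_ifs with hij
  · rw [hij, ← h j]
    ring
  · simp

end Shift

section Irreducible

variable {K : Type*} [Field K]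

theorem exists_single_mem_of_diagonal_invariant {ι : Type*} [Fintype ι] [DecidableEq ι]
    {d : ι → K} (hd : Injective d) {W : Submodule K (ι → K)}
    (hW : ∀ v ∈ W, diagonal d *ᵥ v ∈ W) (hne : W ≠ ⊥) : ∃ i, Pi.single i 1 ∈ W := by
  have hsum := Submodule.eq_iSup_inf_genEigenspace (f := toLin' (diagonal d)) 1
    (by simpa using hW) (iSup_eigenspace_toLin'_diagonal_eq_top d)
  obtain ⟨μ, hμ⟩ : ∃ μ, W ⊓ Module.End.eigenspace (toLin' (diagonal d)) μ ≠ ⊥ := by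
    by_contra! h
    exact hne (hsum.trans (by simp [h]))
  obtain ⟨v, ⟨hvW, hvμ⟩, hv0⟩ := Submodule.exists_mem_ne_zero_of_ne_bot hμ
  obtain ⟨i, hi⟩ : ∃ i, v i ≠ 0 := Function.ne_iff.1 hv0
  have hv (j : ι) : (d j - μ) * v j = 0 := by
    have := congrFun (Module.End.mem_eigenspace_iff.1 hvμ) j
    simp only [toLin'_apply, mulVec_diagonal, Pi.smul_apply, smul_eq_mul] at this
    linear_combination this
  have hdi : d i = μ := sub_eq_zero.1 ((mul_eq_zero.1 (hv i)).resolve_right hi)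
  have hvi : v = v i • Pi.single i 1 := by
    ext j
    rcases eq_or_ne j i with rfl | hji
    · simp
    · have : d j - μ ≠ 0 := sub_ne_zero.2 (hdi ▸ hd.ne hji)
      simpa [hji] using (mul_eq_zero.1 (hv j)).resolve_left this
  exact ⟨i, (W.smul_mem_iff hi).1 (hvi ▸ hvW)⟩

theorem eq_top_of_stdVec_mem {n : ℕ} {f : ℕ → K} (hf : ∀ k, 0 < k → k < n → f k ≠ 0)
    {W : Submodule K (Fin n → K)} (hWp : ∀ v ∈ W, upperShift n f *ᵥ v ∈ W)
    (hWm : ∀ v ∈ W, lowerShift K n *ᵥ v ∈ W) {m : ℕ} (hmn : m < n)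
    (hmW : stdVec K n m ∈ W) : W = ⊤ := by
  have lower (t : ℕ) : stdVec K n (m + t) ∈ W := by
    induction t with
    | zero => exact hmW
    | succ t ih =>
      have := hWm _ ih
      rwa [lowerShift_mulVec_stdVec] at this
  have raise (t : ℕ) (ht : t ≤ m) : stdVec K n (m - t) ∈ W := by
    induction t with
    | zero => exact hmW
    | succ t ih =>
      have := hWp _ (ih (by omega))
      rw [show m - t = m - (t + 1) + 1 by omega, upperShift_mulVec_stdVec_succ f (by omega)] at this
      exact (W.smul_mem_iff (hf _ (by omega) (by omega))).1 this
  refine (Submodule.eq_top_iff_forall_basis_mem (Pi.basisFun K (Fin n))).2 fun j => ?_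
  rw [Pi.basisFun_apply, ← stdVec_val]
  rcases le_total m j with h | h
  · simpa [Nat.add_sub_cancel' h] using lower (j - m)
  · simpa [Nat.sub_sub_self h] using raise (m - j) (by omega)

end Irreducible

section Coefficients

def weight (q ν c : ℂ) (k : ℕ) : ℂ := (q - q⁻¹)⁻¹ * (c - q ^ (2 * k) * ν)

def raiseCoeff (q ν c : ℂ) (k : ℕ) : ℂ :=
  (q - q⁻¹)⁻¹ * qNum q k * (q ^ k * q⁻¹ ^ 2) * ν * ((q ^ 2 + 1) * c - (q ^ (2 * k) + 1) * ν)

lemma raiseCoeff_zero (q ν c : ℂ) : raiseCoeff q ν c 0 = 0 := by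
  simp [raiseCoeff, qNum]

variable {q ν c : ℂ}

lemma raiseCoeff_eq_zero {k : ℕ} (h : (q ^ 2 + 1) * c = (q ^ (2 * k) + 1) * ν) :
    raiseCoeff q ν c k = 0 := by
  rw [raiseCoeff, h, sub_self, mul_zero]

lemma qNum_ne_zero (hq : q ≠ 0) {k : ℕ} (hk : q ^ (2 * k) ≠ 1) : qNum q k ≠ 0 := by
  refine div_ne_zero (fun h => hk ?_) (fun h => hk ?_)
  · rw [two_mul, pow_add]
    nth_rw 2 [sub_eq_zero.1 h]
    rw [← mul_pow, mul_inv_cancel₀ hq, one_pow]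
  · have hsq : q ^ 2 = 1 := by
      rw [sq]
      nth_rw 2 [sub_eq_zero.1 h]
      exact mul_inv_cancel₀ hq
    rw [pow_mul, hsq, one_pow]

variable (hq : q ≠ 0) (hq2 : q ^ 2 ≠ 1)
include hq hq2

lemma sub_inv_ne_zero : q - q⁻¹ ≠ 0 := by
  rw [sub_ne_zero]
  intro h
  apply hq2
  field_simp at h
  linear_combination h

lemma sq_mul_weight_sub_weight_succ (k : ℕ) :
    q ^ 2 * weight q ν c k - weight q ν c (k + 1) = q * c := by
  simp only [weight, pow_succ, pow_mul, mul_add]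
  have : q ^ 2 - 1 ≠ 0 := sub_ne_zero.2 hq2
  field_simp
  ring

lemma inv_sq_mul_weight_succ_sub_weight (k : ℕ) :
    q⁻¹ ^ 2 * weight q ν c (k + 1) - weight q ν c k = -(q⁻¹ * c) := by
  simp only [weight, pow_succ, pow_mul, mul_add]
  have : q ^ 2 - 1 ≠ 0 := sub_ne_zero.2 hq2
  field_simp
  ring

lemma raiseCoeff_succ_sub (k : ℕ) :
    raiseCoeff q ν c (k + 1) - raiseCoeff q ν c k =
      (q + q⁻¹) * ((c - (q - q⁻¹) * weight q ν c k) * weight q ν c k) := by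
  simp only [raiseCoeff, weight, qNum, pow_succ, pow_mul, mul_add, inv_pow]
  have : q ^ 2 - 1 ≠ 0 := sub_ne_zero.2 hq2
  field_simp
  ring

lemma weight_injective {n : ℕ} (hν : ν ≠ 0) (hinj : Set.InjOn ((q ^ 2) ^ ·) (Set.Iio n)) :
    Injective fun p : Fin n => weight q ν c p := by
  intro a b h
  have := mul_left_cancel₀ (inv_ne_zero (sub_inv_ne_zero hq hq2)) h
  refine Fin.ext (hinj a.isLt b.isLt ?_)
  simpa [← pow_mul, hν] using this

lemma raiseCoeff_ne_zero {n : ℕ} (hν : ν ≠ 0) (hcν : (q ^ 2 + 1) * c = (q ^ (2 * n) + 1) * ν)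
    (hinj : Set.InjOn ((q ^ 2) ^ ·) (Set.Iic n)) {k : ℕ} (hk0 : 0 < k) (hkn : k < n) :
    raiseCoeff q ν c k ≠ 0 := by
  have hk1 : q ^ (2 * k) ≠ 1 := by
    rw [pow_mul]
    exact fun h => hk0.ne' (hinj (by simp; omega) (by simp) (by simpa using h))
  have hnk : q ^ (2 * n) - q ^ (2 * k) ≠ 0 := by
    rw [sub_ne_zero, pow_mul, pow_mul]
    exact fun h => hkn.ne' (hinj (by simp) (by simp; omega) h)
  have hlast : (q ^ 2 + 1) * c - (q ^ (2 * k) + 1) * ν = (q ^ (2 * n) - q ^ (2 * k)) * ν := by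
    linear_combination hcν
  rw [raiseCoeff, hlast]
  simp [hq, hν, hnk, sub_inv_ne_zero hq hq2, qNum_ne_zero hq hk1]

end Coefficients

theorem hw_rep_dim_n_general (q : ℂ) (hq : q ≠ 0) (hq2 : q ^ 2 ≠ 1)
    (l : ℕ) (hmin : ∀ m : ℕ, 0 < m → m < l → q ^ (2 * m) ≠ 1)
    (n : ℕ) (hn1 : 1 ≤ n) (hnl : n < l)
    (ν c : ℂ) (hν : ν ≠ 0) (hcν : (q ^ 2 + 1) * c = (q ^ (2 * n) + 1) * ν) :
    let MC : Matrix (Fin n) (Fin n) ℂ := c • 1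
    let M0 : Matrix (Fin n) (Fin n) ℂ :=
      Matrix.diagonal fun p => (q - q⁻¹)⁻¹ * (c - q ^ (2 * (p : ℕ)) * ν)
    let Mm : Matrix (Fin n) (Fin n) ℂ :=
      Matrix.of fun i j => if (i : ℕ) = (j : ℕ) + 1 then 1 else 0
    let Mp : Matrix (Fin n) (Fin n) ℂ :=
      Matrix.of fun i j =>
        if (i : ℕ) + 1 = (j : ℕ) then
          (q - q⁻¹)⁻¹ * qNum q (j : ℕ) * (q ^ (j : ℕ) * q⁻¹ ^ 2) * ν *
            ((q ^ 2 + 1) * c - (q ^ (2 * (j : ℕ)) + 1) * ν)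
        else 0
    (((q ^ 2 : ℂ) • (M0 * Mp) - Mp * M0 = q • (MC * Mp)) ∧
     ((q⁻¹ ^ 2 : ℂ) • (M0 * Mm) - Mm * M0 = -(q⁻¹ • (MC * Mm))) ∧
     (Mp * Mm - Mm * Mp = ((q + q⁻¹) : ℂ) • ((MC - (q - q⁻¹) • M0) * M0)) ∧
     (MC * M0 = M0 * MC) ∧ (MC * Mp = Mp * MC) ∧ (MC * Mm = Mm * MC)) ∧
    Nontrivial (Fin n → ℂ) ∧
    (∀ W : Submodule ℂ (Fin n → ℂ),
      (∀ v ∈ W, M0.mulVec v ∈ W) → (∀ v ∈ W, Mp.mulVec v ∈ W) →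
      (∀ v ∈ W, Mm.mulVec v ∈ W) → (∀ v ∈ W, MC.mulVec v ∈ W) →
      W = ⊥ ∨ W = ⊤) := by
  intro MC M0 Mm Mp
  have hMC : MC = c • 1 := rfl
  have hM0 : M0 = diagonal fun i : Fin n => weight q ν c i := rfl
  have hMm : Mm = lowerShift ℂ n := rfl
  have hMp : Mp = upperShift n (raiseCoeff q ν c) := rfl
  rw [hMC, hM0, hMm, hMp]
  have hinj : Set.InjOn ((q ^ 2) ^ ·) (Set.Iio l) :=
    pow_injOn_Iio_of_pow_ne_one (pow_ne_zero 2 hq) (by simpa only [← pow_mul] using hmin)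
  have hcomm (M : Matrix (Fin n) (Fin n) ℂ) : c • 1 * M = M * c • 1 :=
    ((Commute.one_left M).smul_left c).eq
  refine ⟨⟨?_, ?_, ?_, hcomm _, hcomm _, hcomm _⟩, ?_, ?_⟩
  · rw [smul_mul, one_mul, smul_smul]
    exact smul_diagonal_mul_upperShift_sub _ (sq_mul_weight_sub_weight_succ hq hq2)
  · rw [smul_mul, one_mul, smul_smul, ← neg_smul]
    exact smul_diagonal_mul_lowerShift_sub (inv_sq_mul_weight_succ_sub_weight hq hq2)
  · rw [upperShift_mul_lowerShift (raiseCoeff_eq_zero hcν),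
      lowerShift_mul_upperShift (raiseCoeff_zero q ν c), diagonal_sub, smul_one_eq_diagonal,
      ← diagonal_smul, diagonal_sub, diagonal_mul_diagonal, ← diagonal_smul]
    exact congrArg diagonal (funext fun i => raiseCoeff_succ_sub hq hq2 i)
  · have : Nonempty (Fin n) := ⟨⟨0, hn1⟩⟩
    infer_instance
  · intro W hW0 hWp hWm _
    refine or_iff_not_imp_left.2 fun hne => ?_
    obtain ⟨i, hi⟩ := exists_single_mem_of_diagonal_invariant
      (weight_injective hq hq2 hν (hinj.mono (Set.Iio_subset_Iio hnl.le))) hW0 hne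
    refine eq_top_of_stdVec_mem (f := raiseCoeff q ν c) ?_ hWp hWm i.isLt (by rwa [stdVec_val])
    exact fun k => raiseCoeff_ne_zero hq hq2 hν hcν (hinj.mono (Set.Iic_subset_Iio.2 hnl))

/-- the explicit n-dimensional highest- and lowest-weight
representation (1 ≤ n < l, ν ≠ 0, (q²+1)c = (q^{2n}+1)ν), basis v₀,…,v_{n−1}:
ρ_C v_p = c v_p, ρ₀ v_p = λ⁻¹(c − q^{2p}ν) v_p, ρ₋ v_p = v_{p+1} (ρ₋ v_{n−1} = 0),
ρ₊ v₀ = 0, ρ₊ v_p = λ⁻¹[p]q^{p−2}ν((q²+1)c − (q^{2p}+1)ν) v_{p−1},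
is an irreducible representation of B. -/
theorem hw_rep_dim_n (q : ℂ) (hq : q ≠ 0) (hq2 : q ^ 2 ≠ 1)
    (l : ℕ) (hl : 2 ≤ l) (hq2l : q ^ (2 * l) = 1)
    (hmin : ∀ m : ℕ, 0 < m → m < l → q ^ (2 * m) ≠ 1)
    (n : ℕ) (hn1 : 1 ≤ n) (hnl : n < l)
    (ν c : ℂ) (hν : ν ≠ 0) (hcν : (q ^ 2 + 1) * c = (q ^ (2 * n) + 1) * ν) :
    let MC : Matrix (Fin n) (Fin n) ℂ := c • 1
    let M0 : Matrix (Fin n) (Fin n) ℂ :=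
      Matrix.diagonal fun p => (q - q⁻¹)⁻¹ * (c - q ^ (2 * (p : ℕ)) * ν)
    let Mm : Matrix (Fin n) (Fin n) ℂ :=
      Matrix.of fun i j => if (i : ℕ) = (j : ℕ) + 1 then 1 else 0
    let Mp : Matrix (Fin n) (Fin n) ℂ :=
      Matrix.of fun i j =>
        if (i : ℕ) + 1 = (j : ℕ) then
          (q - q⁻¹)⁻¹ * qNum q (j : ℕ) * (q ^ (j : ℕ) * q⁻¹ ^ 2) * ν *
            ((q ^ 2 + 1) * c - (q ^ (2 * (j : ℕ)) + 1) * ν)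
        else 0
    (((q ^ 2 : ℂ) • (M0 * Mp) - Mp * M0 = q • (MC * Mp)) ∧
     ((q⁻¹ ^ 2 : ℂ) • (M0 * Mm) - Mm * M0 = -(q⁻¹ • (MC * Mm))) ∧
     (Mp * Mm - Mm * Mp = ((q + q⁻¹) : ℂ) • ((MC - (q - q⁻¹) • M0) * M0)) ∧
     (MC * M0 = M0 * MC) ∧ (MC * Mp = Mp * MC) ∧ (MC * Mm = Mm * MC)) ∧
    Nontrivial (Fin n → ℂ) ∧
    (∀ W : Submodule ℂ (Fin n → ℂ),
      (∀ v ∈ W, M0.mulVec v ∈ W) → (∀ v ∈ W, Mp.mulVec v ∈ W) →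
      (∀ v ∈ W, Mm.mulVec v ∈ W) → (∀ v ∈ W, MC.mulVec v ∈ W) →
      W = ⊥ ∨ W = ⊤) :=
  hw_rep_dim_n_general q hq hq2 l hmin n hn1 hnl ν c hν hcν

end SL2q
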